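/- For every real algebraic number ζ, there exists a point configuration C(ζ) in ℝ² that contains the point ζe₁ = (ζ, 0) and the set Q² + 𝟏 = {0, 1, 2}², and that is framed by Q² + 𝟏. -/

import Mathlib

open scoped RealInnerProductSpace

noncomputable section

/-- `ℝ^n` with the Euclidean norm. -/
abbrev ESp (n : ℕ) := EuclideanSpace ℝ (Fin n)

/-- A polytope is the convex hull of a finite set of points. -/
def IsPolytope {n : ℕ} (P : Set (ESp n)) : Prop :=
  ∃ V : Finset (ESp n), P = convexHull ℝ (V : Set (ESp n))

/-- The vertex set `F₀(P)` of a polytope: its extreme points. -/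
def verts {n : ℕ} (P : Set (ESp n)) : Set (ESp n) := Set.extremePoints ℝ P

/-- The dimension of a polytope: the dimension of its affine hull. -/
def polyDim {n : ℕ} (P : Set (ESp n)) : ℕ :=
  Module.finrank ℝ (affineSpan ℝ P).direction

/-- The faces of a polytope `P` are `∅`, `P`, and the intersections of `P` with a
hyperplane having `P` in one of its closed sides. -/
def IsFaceOf {n : ℕ} (P F : Set (ESp n)) : Prop :=
  F = ∅ ∨ F = P ∨ ∃ (c : ESp n) (a : ℝ), c ≠ 0 ∧ (∀ x ∈ P, ⟪c, x⟫ ≤ a) ∧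
    F = {x ∈ P | ⟪c, x⟫ = a}

/-- Denominator `⟨c, x⟩ + δ` of the projective map given by an `(n+1)×(n+1)` matrix `M`
(the last row of `M` is `(c, δ)`). -/
def projDen {n : ℕ} (M : Matrix (Fin (n + 1)) (Fin (n + 1)) ℝ) (x : ESp n) : ℝ :=
  (∑ j, M (Fin.last n) j.castSucc * x j) + M (Fin.last n) (Fin.last n)

/-- The projective transformation `x ↦ (Ax + b)/(⟨c, x⟩ + δ)` given by the
`(n+1)×(n+1)` matrix `M` with blocks `A, b, c, δ`. -/
def projApp {n : ℕ} (M : Matrix (Fin (n + 1)) (Fin (n + 1)) ℝ) (x : ESp n) : ESp n :=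
  WithLp.toLp 2 fun i => ((∑ j, M i.castSucc j.castSucc * x j) + M i.castSucc (Fin.last n)) / projDen M x

/-- Two sets are projectively equivalent if some projective transformation (given by an
invertible matrix), defined at every point of the first set, maps it bijectively onto the
second one. -/
def ProjEquiv {n : ℕ} (S T : Set (ESp n)) : Prop :=
  ∃ M : Matrix (Fin (n + 1)) (Fin (n + 1)) ℝ, IsUnit M.det ∧
    (∀ x ∈ S, projDen M x ≠ 0) ∧ Set.BijOn (projApp M) S T

/-- `S` is the vertex set of some face of `P`. -/
def IsVertexSetOfFace {n : ℕ} (P S : Set (ESp n)) : Prop :=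
  ∃ F, IsFaceOf P F ∧ verts F = S

/-- Combinatorial equivalence of two polytopes under a vertex bijection `φ`. -/
def CombEquivUnder {n : ℕ} (P P' : Set (ESp n)) (φ : ESp n → ESp n) : Prop :=
  Set.BijOn φ (verts P) (verts P') ∧
  ∀ S ⊆ verts P, IsVertexSetOfFace P S ↔ IsVertexSetOfFace P' (φ '' S)

/-- A polytope `P ⊆ ℝ^n` is projectively unique if every combinatorial equivalence of `P`
with a polytope `P'` in `ℝ^n` agrees on the vertices with a projective transformation
defined at all points of `P` and mapping `P` onto `P'`. -/
def ProjUniquePolytope {n : ℕ} (P : Set (ESp n)) : Prop :=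
  IsPolytope P ∧ ∀ (P' : Set (ESp n)) (φ : ESp n → ESp n),
    IsPolytope P' → CombEquivUnder P P' φ →
    ∃ M : Matrix (Fin (n + 1)) (Fin (n + 1)) ℝ, IsUnit M.det ∧
      (∀ x ∈ P, projDen M x ≠ 0) ∧ (∀ w ∈ verts P, projApp M w = φ w) ∧
      Set.BijOn (projApp M) P P'

/-- The standard coordinate embedding `ℝ^d ⊆ ℝ^n` for `d ≤ n`. -/
def coordEmbed {d n : ℕ} (_h : d ≤ n) (x : ESp d) : ESp n :=
  WithLp.toLp 2 fun i => if h' : (i : ℕ) < d then x ⟨i, h'⟩ else 0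

/-- Lawrence equivalence of two point configurations under a bijection `φ`:
for every oriented hyperplane `H` there is an oriented hyperplane `H'` with
`φ(R ∩ H₊) = R' ∩ H'₊` and `φ(R ∩ H₋) = R' ∩ H'₋`. -/
def LawrenceEquivConfig {n : ℕ} (R R' : Set (ESp n)) (φ : ESp n → ESp n) : Prop :=
  Set.BijOn φ R R' ∧
  ∀ (c : ESp n) (a : ℝ), c ≠ 0 →
    ∃ (c' : ESp n) (a' : ℝ), c' ≠ 0 ∧
      φ '' (R ∩ {x | a < ⟪c, x⟫}) = R' ∩ {x | a' < ⟪c', x⟫} ∧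
      φ '' (R ∩ {x | ⟪c, x⟫ < a}) = R' ∩ {x | ⟪c', x⟫ < a'}

/-- A point configuration is projectively unique if every Lawrence equivalence with another
point configuration agrees on it with a projective transformation defined at all its points. -/
def ProjUniqueConfig {n : ℕ} (R : Set (ESp n)) : Prop :=
  R.Finite ∧ ∀ (R' : Set (ESp n)) (φ : ESp n → ESp n),
    LawrenceEquivConfig R R' φ →
    ∃ M : Matrix (Fin (n + 1)) (Fin (n + 1)) ℝ, IsUnit M.det ∧
      (∀ x ∈ R, projDen M x ≠ 0) ∧ ∀ x ∈ R, projApp M x = φ x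

/-- `R` is framed by `Q ⊆ R` if every Lawrence equivalence of `R` with another point
configuration that is the identity on `Q` is the identity on `R`. -/
def FramedBy {n : ℕ} (R Q : Set (ESp n)) : Prop :=
  Q ⊆ R ∧ ∀ (R' : Set (ESp n)) (φ : ESp n → ESp n),
    LawrenceEquivConfig R R' φ → (∀ q ∈ Q, φ q = q) → ∀ x ∈ R, φ x = x

/-- A PP configuration: a polytope together with a finite point set disjoint from it. -/
def IsPPConfig {n : ℕ} (P R : Set (ESp n)) : Prop :=
  IsPolytope P ∧ R.Finite ∧ P ∩ R = ∅

/-- Lawrence equivalence of PP configurations under a bijection `φ` of `F₀(P) ∪ R` with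
`F₀(P') ∪ R'` mapping `F₀(P)` onto `F₀(P')` and `R` onto `R'`. -/
def LawrenceEquivPP {n : ℕ} (P R P' R' : Set (ESp n)) (φ : ESp n → ESp n) : Prop :=
  Set.InjOn φ (verts P ∪ R) ∧ Set.BijOn φ (verts P) (verts P') ∧ Set.BijOn φ R R' ∧
  ∀ (c : ESp n) (a : ℝ), c ≠ 0 → (∀ x ∈ P, ⟪c, x⟫ ≤ a) →
    ∃ (c' : ESp n) (a' : ℝ), c' ≠ 0 ∧ (∀ x ∈ P', ⟪c', x⟫ ≤ a') ∧
      φ '' (verts P ∩ {x | ⟪c, x⟫ < a}) = verts P' ∩ {x | ⟪c', x⟫ < a'} ∧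
      φ '' (R ∩ {x | a < ⟪c, x⟫}) = R' ∩ {x | a' < ⟪c', x⟫} ∧
      φ '' (R ∩ {x | ⟪c, x⟫ < a}) = R' ∩ {x | ⟪c', x⟫ < a'}

/-- A PP configuration `(P, R)` is projectively unique if every Lawrence equivalence with
another PP configuration agrees on `F₀(P) ∪ R` with a projective transformation defined at
all points of `F₀(P) ∪ R`. -/
def ProjUniquePP {n : ℕ} (P R : Set (ESp n)) : Prop :=
  IsPPConfig P R ∧ ∀ (P' R' : Set (ESp n)) (φ : ESp n → ESp n),
    IsPPConfig P' R' → LawrenceEquivPP P R P' R' φ →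
    ∃ M : Matrix (Fin (n + 1)) (Fin (n + 1)) ℝ, IsUnit M.det ∧
      (∀ x ∈ verts P ∪ R, projDen M x ≠ 0) ∧ ∀ x ∈ verts P ∪ R, projApp M x = φ x

/-- `(P, R)` is framed by `Q ⊆ F₀(P) ∪ R` if every Lawrence equivalence of `(P, R)` with
another PP configuration that is the identity on `Q` is the identity. -/
def FramedPP {n : ℕ} (P R Q : Set (ESp n)) : Prop :=
  Q ⊆ verts P ∪ R ∧ ∀ (P' R' : Set (ESp n)) (φ : ESp n → ESp n),
    IsPPConfig P' R' → LawrenceEquivPP P R P' R' φ → (∀ q ∈ Q, φ q = q) →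
    ∀ x ∈ verts P ∪ R, φ x = x

/-- A polytope `P` is framed by `Q ⊆ F₀(P)` if `(P, ∅)` is framed by `Q`. -/
def PolytopeFramedBy {n : ℕ} (P Q : Set (ESp n)) : Prop := FramedPP P ∅ Q

/-- A weak projective triple `(P, Q, R)` in `ℝ^d`. -/
def WeakProjTriple {d : ℕ} (P Q R : Set (ESp d)) : Prop :=
  IsPolytope P ∧ Q ⊆ verts P ∧ R.Finite ∧
  ProjUniqueConfig (Q ∪ R) ∧
  PolytopeFramedBy P Q ∧
  ∃ S ⊆ R, ∃ (c : ESp d) (a : ℝ), c ≠ 0 ∧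
    (affineSpan ℝ S : Set (ESp d)) = {x | ⟪c, x⟫ = a} ∧
    {x | ⟪c, x⟫ = a} ∩ P = ∅

/-- A subpolytope of `S`: a convex hull of a subset of the vertices of `S`. -/
def IsSubpolytopeOf {n : ℕ} (P S : Set (ESp n)) : Prop :=
  ∃ V ⊆ verts S, P = convexHull ℝ V

/-- Stacked `d`-polytopes: `d`-simplices, closed under stacking a point `v` beyond a facet
`F` (i.e. `v` and the interior of `S` lie strictly on opposite sides of the affine hull of
`F`, and strictly on the same side of the affine hull of every other facet of `S`). -/
inductive IsStackedPolytope (d : ℕ) : Set (ESp d) → Prop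
  | simplex (V : Finset (ESp d)) (hcard : V.card = d + 1)
      (hind : AffineIndependent ℝ (Subtype.val : {x : ESp d // x ∈ V} → ESp d)) :
      IsStackedPolytope d (convexHull ℝ (V : Set (ESp d)))
  | stack (S F : Set (ESp d)) (v : ESp d) (hS : IsStackedPolytope d S)
      (hF : IsFaceOf S F) (hdim : polyDim F + 1 = d)
      (hbeyond : ∀ F', IsFaceOf S F' → polyDim F' + 1 = d →
        ∃ (c : ESp d) (a : ℝ), c ≠ 0 ∧
          (affineSpan ℝ F' : Set (ESp d)) = {x | ⟪c, x⟫ = a} ∧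
          interior S ⊆ {x | ⟪c, x⟫ < a} ∧
          (F' = F → a < ⟪c, v⟫) ∧ (F' ≠ F → ⟪c, v⟫ < a)) :
      IsStackedPolytope d (convexHull ℝ (S ∪ {v}))

/-- The first standard basis vector `e₁` of `ℝ²`. -/
def e1 : ESp 2 := EuclideanSpace.single 0 1

/-- The point configuration `Q² + 𝟏 = {0, 1, 2}²` in `ℝ²`. -/
def Qsq : Set (ESp 2) := {p | ∀ i, p i = 0 ∨ p i = 1 ∨ p i = 2}

/-- A functional arrangement for a function `f : ℝ^ι → ℝ`. -/
def IsFunctionalArrangement {ι : Type} [Fintype ι]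
    (f : (ι → ℝ) → ℝ) (F : (ι → ℝ) → Set (ESp 2)) : Prop :=
  ∀ x : ι → ℝ,
    (F x).Finite ∧
    (f x) • e1 ∈ F x ∧
    (∀ i, (x i) • e1 ∈ F x) ∧
    Qsq ⊆ F x ∧
    FramedBy (F x) ({p | ∃ i, p = (x i) • e1} ∪ Qsq) ∧
    ∀ (R' : Set (ESp 2)) (φ : ESp 2 → ESp 2),
      LawrenceEquivConfig (F x) R' φ → (∀ q ∈ Qsq, φ q = q) →
      φ ((f x) • e1) = (f x) • e1 →
      ∃ y : ι → ℝ, f y = f x ∧ ∀ i, φ ((x i) • e1) = (y i) • e1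

open Polynomial

/-!
A line of `ℝ²` is a hyperplane, so a Lawrence equivalence `φ` maps collinear points of the
configuration to collinear points. Once `φ` fixes the grid `{0, 1, 2}²`, it preserves the grid
lines `y = 0, 1, 2` and `x = 0`, and von Staudt constructions along them transport arithmetic:
if `(u, 0) ↦ (u', 0)` and `(v, 0) ↦ (v', 0)`, then the points built from `u, v` to produce
`(-u, 0)`, `(u + v, 0)`, `(u v / m, 0)` are sent to the points built in the same way from
`u', v'`. Integers and rationals are built from the grid alone and are therefore fixed.

Let `P` be an integer polynomial with root `ζ`, and let `(ζ, 0) ↦ (t, 0)`. The vertical lines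
between `ζ` and two fixed rational points `r₁ < ζ < r₂` keep their sides, so `r₁ < t < r₂`;
running Horner's scheme for `P(ζ)` ends at the fixed origin, so `P(t) = 0`. With `[r₁, r₂]`
chosen free of other roots of `P` (and of the finitely many values at which a multiplication step
degenerates) this gives `t = ζ`, and then every constructed point is fixed.
-/

def pt (a b : ℝ) : ESp 2 := !₂[a, b]

@[simp] lemma pt_apply_zero (a b : ℝ) : pt a b 0 = a := rfl

@[simp] lemma pt_apply_one (a b : ℝ) : pt a b 1 = b := rfl

lemma pt_eta (x : ESp 2) : pt (x 0) (x 1) = x := by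
  ext i; fin_cases i <;> rfl

lemma pt_inj {a b c d : ℝ} : pt a b = pt c d ↔ a = c ∧ b = d := by
  refine ⟨fun h => ⟨?_, ?_⟩, fun ⟨rfl, rfl⟩ => rfl⟩
  · simpa using congrArg (· 0) h
  · simpa using congrArg (· 1) h

lemma pt_zero_zero : pt 0 0 = 0 := by
  ext i; fin_cases i <;> rfl

lemma pt_sub_pt (a b c d : ℝ) : pt a b - pt c d = pt (a - c) (b - d) := by
  ext i; fin_cases i <;> rfl

lemma smul_e1 (a : ℝ) : a • e1 = pt a 0 := by
  ext i; fin_cases i <;> simp [e1]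

lemma inner_eq_fin_two (x y : ESp 2) : ⟪x, y⟫ = x 0 * y 0 + x 1 * y 1 := by
  simp [PiLp.inner_apply, Fin.sum_univ_two]; ring

lemma pt_mem_Qsq {a b : ℝ} (ha : a = 0 ∨ a = 1 ∨ a = 2) (hb : b = 0 ∨ b = 1 ∨ b = 2) :
    pt a b ∈ Qsq := by
  intro i; fin_cases i <;> assumption

lemma Qsq_finite : Qsq.Finite := by
  have h012 : ({0, 1, 2} : Set ℝ).Finite := by simp
  refine ((Set.Finite.pi (t := fun _ : Fin 2 => ({0, 1, 2} : Set ℝ)) fun _ => h012).preimage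
    (WithLp.ofLp_injective 2).injOn).subset fun p hp i _ => ?_
  simpa using hp i

def cross (u v : ESp 2) : ℝ := u 0 * v 1 - u 1 * v 0

@[simp] lemma cross_pt (a b c d : ℝ) : cross (pt a b) (pt c d) = a * d - b * c := rfl

lemma cross_sub_right (u v w : ESp 2) : cross u (v - w) = cross u v - cross u w := by
  simp only [cross, PiLp.sub_apply]; ring

lemma cross_eq_zero_of_inner_eq_zero {c u v : ESp 2} (hc : c ≠ 0) (hu : ⟪c, u⟫ = 0)
    (hv : ⟪c, v⟫ = 0) : cross u v = 0 := by
  rw [inner_eq_fin_two] at hu hv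
  have h₀ : c 0 * cross u v = 0 := by unfold cross; linear_combination v 1 * hu - u 1 * hv
  have h₁ : c 1 * cross u v = 0 := by unfold cross; linear_combination u 0 * hv - v 0 * hu
  by_contra h
  exact hc (by rw [← pt_eta c, (mul_eq_zero.mp h₀).resolve_right h,
    (mul_eq_zero.mp h₁).resolve_right h, pt_zero_zero])

lemma eq_zero_of_cross_eq_zero {u v w : ESp 2} (huv : cross u v ≠ 0) (hu : cross u w = 0)
    (hv : cross v w = 0) : w = 0 := by
  have h₀ : cross u v * w 0 = 0 := by unfold cross at *; linear_combination v 0 * hu - u 0 * hv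
  have h₁ : cross u v * w 1 = 0 := by unfold cross at *; linear_combination v 1 * hu - u 1 * hv
  rw [← pt_eta w, (mul_eq_zero.mp h₀).resolve_left huv, (mul_eq_zero.mp h₁).resolve_left huv,
    pt_zero_zero]

namespace LawrenceEquivConfig

section

variable {n : ℕ} {R R' : Set (ESp n)} {φ : ESp n → ESp n}

/-- A point of `R` on the hyperplane cannot be sent to an open side of the image hyperplane:
the preimage of that side lies strictly off the hyperplane, and `φ` is injective on `R`. -/
theorem exists_inner_map_eq (h : LawrenceEquivConfig R R' φ) {c : ESp n} (hc : c ≠ 0)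
    (a : ℝ) : ∃ (c' : ESp n) (a' : ℝ), c' ≠ 0 ∧ ∀ x ∈ R, ⟪c, x⟫ = a → ⟪c', φ x⟫ = a' := by
  obtain ⟨c', a', hc', hpos, hneg⟩ := h.2 c a hc
  refine ⟨c', a', hc', fun x hx hxa => ?_⟩
  have not_mem_image : ∀ S : Set (ESp n), x ∉ S → φ x ∉ φ '' (R ∩ S) := by
    rintro S hxS ⟨y, ⟨hy, hyS⟩, hyx⟩
    exact hxS (h.1.injOn hy hx hyx ▸ hyS)
  rcases lt_trichotomy ⟪c', φ x⟫ a' with hlt | heq | hgt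
  · refine absurd ?_ (not_mem_image {w | ⟪c, w⟫ < a} (by simp [hxa]))
    rw [hneg]; exact ⟨h.1.mapsTo hx, hlt⟩
  · exact heq
  · refine absurd ?_ (not_mem_image {w | a < ⟪c, w⟫} (by simp [hxa]))
    rw [hpos]; exact ⟨h.1.mapsTo hx, hgt⟩

theorem sub_mul_sub_pos {x y z : ESp n} {X Y Z : ℝ} {e : ESp n} (h : LawrenceEquivConfig R R' φ)
    (hx : x ∈ R) (hy : y ∈ R) (hz : z ∈ R) (hφx : φ x = X • e) (hφy : φ y = Y • e)
    (hφz : φ z = Z • e) {c : ESp n} {a : ℝ} (hc : c ≠ 0) (hxc : ⟪c, x⟫ < a) (hyc : a < ⟪c, y⟫)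
    (hzc : a < ⟪c, z⟫) : 0 < (Y - X) * (Z - X) := by
  obtain ⟨c', a', -, hpos, hneg⟩ := h.2 c a hc
  have hX : ⟪c', φ x⟫ < a' :=
    (show φ x ∈ R' ∩ {w | ⟪c', w⟫ < a'} from hneg ▸ Set.mem_image_of_mem φ ⟨hx, hxc⟩).2
  have hY : a' < ⟪c', φ y⟫ :=
    (show φ y ∈ R' ∩ {w | a' < ⟪c', w⟫} from hpos ▸ Set.mem_image_of_mem φ ⟨hy, hyc⟩).2
  have hZ : a' < ⟪c', φ z⟫ :=
    (show φ z ∈ R' ∩ {w | a' < ⟪c', w⟫} from hpos ▸ Set.mem_image_of_mem φ ⟨hz, hzc⟩).2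
  rw [hφx, inner_smul_right] at hX
  rw [hφy, inner_smul_right] at hY
  rw [hφz, inner_smul_right] at hZ
  have := mul_pos (sub_pos.mpr (hX.trans hY)) (sub_pos.mpr (hX.trans hZ))
  nlinarith [sq_nonneg ⟪c', e⟫]

end

variable {R R' : Set (ESp 2)} {φ : ESp 2 → ESp 2}

theorem cross_map_eq_zero (h : LawrenceEquivConfig R R' φ) {a b x : ESp 2} (ha : a ∈ R)
    (hb : b ∈ R) (hx : x ∈ R) (hab : a ≠ b) (hx_ab : cross (b - a) (x - a) = 0) :
    cross (φ b - φ a) (φ x - φ a) = 0 := by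
  set c : ESp 2 := pt (-(b - a) 1) ((b - a) 0)
  have inner_c : ∀ z, ⟪c, z⟫ = cross (b - a) z := fun z => by
    simp only [c, inner_eq_fin_two, cross, pt_apply_zero, pt_apply_one]; ring
  have hc : c ≠ 0 := by
    refine fun h0 => hab (sub_eq_zero.mp ?_).symm
    rw [← pt_eta (b - a), ← pt_zero_zero, pt_inj]
    have := pt_inj.mp (h0.trans pt_zero_zero.symm)
    exact ⟨this.2, neg_eq_zero.mp this.1⟩
  obtain ⟨c', a', hc', himage⟩ := h.exists_inner_map_eq hc ⟪c, a⟫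
  have image_on_line : ∀ z ∈ R, cross (b - a) (z - a) = 0 → ⟪c', φ z⟫ = a' := by
    refine fun z hz hz_ab => himage z hz ?_
    rw [← sub_eq_zero, ← inner_sub_right, inner_c, hz_ab]
  have hφa := image_on_line a ha (by simp [cross])
  have hφb := image_on_line b hb (by simp only [cross]; ring)
  have hφx := image_on_line x hx hx_ab
  exact cross_eq_zero_of_inner_eq_zero hc' (by rw [inner_sub_right, hφa, hφb, sub_self])
    (by rw [inner_sub_right, hφa, hφx, sub_self])

theorem mem_Ioo_of_mem_Ioo (h : LawrenceEquivConfig R R' φ) {a b x t : ℝ}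
    (ha : pt a 0 ∈ R ∧ φ (pt a 0) = pt a 0) (hb : pt b 0 ∈ R ∧ φ (pt b 0) = pt b 0)
    (hx : pt x 0 ∈ R) (hφx : φ (pt x 0) = pt t 0) (hax : a < x) (hxb : x < b) :
    a < t ∧ t < b := by
  have on_axis : ∀ s : ℝ, pt s 0 = s • pt 1 0 := fun s => by
    rw [← pt_eta (s • pt 1 0)]; simp
  have inner_pt : ∀ c s : ℝ, ⟪pt c 0, pt s 0⟫ = c * s := fun c s => by
    simp [inner_eq_fin_two]
  have hc : ∀ c : ℝ, c ≠ 0 → pt c 0 ≠ 0 := fun c hc h0 => hc (by simpa using congrArg (· 0) h0)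
  have hφa := ha.2.trans (on_axis a)
  have hφb := hb.2.trans (on_axis b)
  have hφx' := hφx.trans (on_axis t)
  have lower := h.sub_mul_sub_pos ha.1 hx hb.1 hφa hφx' hφb (hc 1 one_ne_zero)
    (a := (a + x) / 2) (by rw [inner_pt]; linarith) (by rw [inner_pt]; linarith)
    (by rw [inner_pt]; linarith)
  have upper := h.sub_mul_sub_pos hb.1 hx ha.1 hφb hφx' hφa (hc (-1) (by norm_num))
    (a := -(x + b) / 2) (by rw [inner_pt]; linarith) (by rw [inner_pt]; linarith)
    (by rw [inner_pt]; linarith)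
  constructor <;> nlinarith

end LawrenceEquivConfig

structure IsGridFixing (C : Set (ESp 2)) (φ : ESp 2 → ESp 2) : Prop where
  lawrence : ∃ R', LawrenceEquivConfig C R' φ
  subset : Qsq ⊆ C
  map_eq : ∀ q ∈ Qsq, φ q = q

namespace IsGridFixing

variable {C : Set (ESp 2)} {φ : ESp 2 → ESp 2}

theorem grid (hφ : IsGridFixing C φ) (a b : ℝ) (ha : a = 0 ∨ a = 1 ∨ a = 2)
    (hb : b = 0 ∨ b = 1 ∨ b = 2) : pt a b ∈ C ∧ φ (pt a b) = pt a b :=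
  ⟨hφ.subset (pt_mem_Qsq ha hb), hφ.map_eq _ (pt_mem_Qsq ha hb)⟩

theorem exists_map_eq_pt (hφ : IsGridFixing C φ) {x : ℝ} (hx : pt x 0 ∈ C) :
    ∃ t, φ (pt x 0) = pt t 0 := by
  obtain ⟨R', hL⟩ := hφ.lawrence
  have h := hL.cross_map_eq_zero (hφ.grid 0 0 (by norm_num) (by norm_num)).1
    (hφ.grid 1 0 (by norm_num) (by norm_num)).1 hx (by simp [pt_inj]) (by simp [pt_sub_pt])
  rw [(hφ.grid 0 0 (by norm_num) (by norm_num)).2, (hφ.grid 1 0 (by norm_num) (by norm_num)).2,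
    pt_zero_zero, sub_zero, sub_zero] at h
  exact ⟨φ (pt x 0) 0, by rw [← pt_eta (φ (pt x 0)), pt_inj]; simpa [cross] using h⟩

theorem map_eq_of_mem_lines (hφ : IsGridFixing C φ) {a b p q x y : ESp 2} (ha : a ∈ C)
    (hb : b ∈ C) (hx : x ∈ C) (hp : p ∈ Qsq) (hq : q ∈ Qsq) (hab : a ≠ b) (hpq : p ≠ q)
    (hx_ab : cross (b - a) (x - a) = 0) (hx_pq : cross (q - p) (x - p) = 0)
    (hy_ab : cross (φ b - φ a) (y - φ a) = 0) (hy_pq : cross (q - p) (y - p) = 0)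
    (hpar : cross (φ b - φ a) (q - p) ≠ 0) : φ x = y := by
  obtain ⟨R', hL⟩ := hφ.lawrence
  have h₁ := hL.cross_map_eq_zero ha hb hx hab hx_ab
  have h₂ := hL.cross_map_eq_zero (hφ.subset hp) (hφ.subset hq) hx hpq hx_pq
  rw [hφ.map_eq p hp, hφ.map_eq q hq] at h₂
  refine sub_eq_zero.mp (eq_zero_of_cross_eq_zero hpar ?_ ?_)
  · rw [← sub_sub_sub_cancel_right (φ x) y (φ a), cross_sub_right, h₁, hy_ab, sub_zero]
  · rw [← sub_sub_sub_cancel_right (φ x) y p, cross_sub_right, h₂, hy_pq, sub_zero]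

theorem map_pt_of_horizontal (hφ : IsGridFixing C φ) {a₀ a₁ b₀ b₁ A₀ A₁ B₀ B₁ x x' k : ℝ}
    (ha : pt a₀ a₁ ∈ C ∧ φ (pt a₀ a₁) = pt A₀ A₁) (hb : pt b₀ b₁ ∈ C ∧ φ (pt b₀ b₁) = pt B₀ B₁)
    (hk : k = 0 ∨ k = 1 ∨ k = 2) (hx : pt x k ∈ C) (hab : a₁ ≠ b₁) (hAB : A₁ ≠ B₁)
    (hx_ab : (b₀ - a₀) * (k - a₁) = (b₁ - a₁) * (x - a₀))
    (hx'_AB : (B₀ - A₀) * (k - A₁) = (B₁ - A₁) * (x' - A₀)) : φ (pt x k) = pt x' k := by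
  refine hφ.map_eq_of_mem_lines (p := pt 0 k) (q := pt 1 k) ha.1 hb.1 hx
    (pt_mem_Qsq (by norm_num) hk) (pt_mem_Qsq (by norm_num) hk) (by simp [pt_inj, hab])
    (by simp [pt_inj]) ?_ ?_ ?_ ?_ ?_ <;>
    simp only [ha.2, hb.2, pt_sub_pt, cross_pt]
  · linear_combination hx_ab
  · ring
  · linear_combination hx'_AB
  · ring
  · exact fun h => hAB (by linarith)

theorem map_pt_of_vertical (hφ : IsGridFixing C φ) {a₀ a₁ b₀ b₁ A₀ A₁ B₀ B₁ y y' : ℝ}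
    (ha : pt a₀ a₁ ∈ C ∧ φ (pt a₀ a₁) = pt A₀ A₁) (hb : pt b₀ b₁ ∈ C ∧ φ (pt b₀ b₁) = pt B₀ B₁)
    (hy : pt 0 y ∈ C) (hab : a₀ ≠ b₀) (hAB : A₀ ≠ B₀)
    (hy_ab : (b₁ - a₁) * (0 - a₀) = (b₀ - a₀) * (y - a₁))
    (hy'_AB : (B₁ - A₁) * (0 - A₀) = (B₀ - A₀) * (y' - A₁)) : φ (pt 0 y) = pt 0 y' := by
  refine hφ.map_eq_of_mem_lines (p := pt 0 0) (q := pt 0 1) ha.1 hb.1 hy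
    (pt_mem_Qsq (by norm_num) (by norm_num)) (pt_mem_Qsq (by norm_num) (by norm_num))
    (by simp [pt_inj, hab]) (by simp [pt_inj]) ?_ ?_ ?_ ?_ ?_ <;>
    simp only [ha.2, hb.2, pt_sub_pt, cross_pt]
  · linear_combination -hy_ab
  · ring
  · linear_combination -hy'_AB
  · ring
  · exact fun h => hAB (by linarith)

end IsGridFixing

/- Each point of a gadget is the intersection of a grid line with the line through two earlier
points or inputs; e.g. in `mulGadget`, `(0, u / (u - m))` lies on the line through `(u, 0)` and
`(m, 1)`, and `(u v / m, 0)` on the line through `(0, u / (u - m))` and `(v, 1)`. -/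

def negGadget (u : ℝ) : List (ESp 2) := [pt (u / 2) 1, pt u 2, pt (-u) 0]

def addGadget (u v : ℝ) : List (ESp 2) :=
  negGadget u ++ [pt (-u / 2) 1, pt (-u - v) 2, pt (u + v) 0]

def liftGadget (u : ℝ) : List (ESp 2) := negGadget u ++ [pt u 1]

def mulGadget (u v m : ℝ) : List (ESp 2) := [pt 0 (u / (u - m)), pt (u * v / m) 0]

namespace IsGridFixing

variable {C : Set (ESp 2)} {φ : ESp 2 → ESp 2}

theorem map_negGadget (hφ : IsGridFixing C φ) {u u' : ℝ}
    (hu : pt u 0 ∈ C ∧ φ (pt u 0) = pt u' 0) (hG : ∀ p ∈ negGadget u, p ∈ C) :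
    φ (pt (-u) 0) = pt (-u') 0 ∧ (negGadget u).map φ = negGadget u' := by
  have h₁ : φ (pt (u / 2) 1) = pt (u' / 2) 1 :=
    hφ.map_pt_of_horizontal hu (hφ.grid 0 2 (by norm_num) (by norm_num)) (by norm_num)
      (hG _ (by simp [negGadget])) (by norm_num) (by norm_num) (by ring) (by ring)
  have h₂ : φ (pt u 2) = pt u' 2 :=
    hφ.map_pt_of_horizontal (hφ.grid 0 0 (by norm_num) (by norm_num))
      ⟨hG _ (by simp [negGadget]), h₁⟩ (by norm_num) (hG _ (by simp [negGadget])) (by norm_num)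
      (by norm_num) (by ring) (by ring)
  have h₃ : φ (pt (-u) 0) = pt (-u') 0 :=
    hφ.map_pt_of_horizontal (hφ.grid 0 1 (by norm_num) (by norm_num))
      ⟨hG _ (by simp [negGadget]), h₂⟩ (by norm_num) (hG _ (by simp [negGadget])) (by norm_num)
      (by norm_num) (by ring) (by ring)
  exact ⟨h₃, by simp [negGadget, h₁, h₂, h₃]⟩

theorem map_addGadget (hφ : IsGridFixing C φ) {u v u' v' : ℝ}
    (hu : pt u 0 ∈ C ∧ φ (pt u 0) = pt u' 0) (hv : pt v 0 ∈ C ∧ φ (pt v 0) = pt v' 0)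
    (hG : ∀ p ∈ addGadget u v, p ∈ C) :
    φ (pt (u + v) 0) = pt (u' + v') 0 ∧ (addGadget u v).map φ = addGadget u' v' := by
  obtain ⟨h₀, hneg⟩ := hφ.map_negGadget hu fun p hp => hG p (List.mem_append_left _ hp)
  have h₁ : φ (pt (-u / 2) 1) = pt (-u' / 2) 1 :=
    hφ.map_pt_of_horizontal ⟨hG _ (by simp [addGadget, negGadget]), h₀⟩
      (hφ.grid 0 2 (by norm_num) (by norm_num)) (by norm_num) (hG _ (by simp [addGadget]))
      (by norm_num) (by norm_num) (by ring) (by ring)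
  have h₂ : φ (pt (-u - v) 2) = pt (-u' - v') 2 :=
    hφ.map_pt_of_horizontal hv ⟨hG _ (by simp [addGadget]), h₁⟩ (by norm_num)
      (hG _ (by simp [addGadget])) (by norm_num) (by norm_num) (by ring) (by ring)
  have h₃ : φ (pt (u + v) 0) = pt (u' + v') 0 :=
    hφ.map_pt_of_horizontal (hφ.grid 0 1 (by norm_num) (by norm_num))
      ⟨hG _ (by simp [addGadget]), h₂⟩ (by norm_num) (hG _ (by simp [addGadget])) (by norm_num)
      (by norm_num) (by ring) (by ring)
  exact ⟨h₃, by simp [addGadget, hneg, h₁, h₂, h₃]⟩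

theorem map_liftGadget (hφ : IsGridFixing C φ) {u u' : ℝ}
    (hu : pt u 0 ∈ C ∧ φ (pt u 0) = pt u' 0) (hG : ∀ p ∈ liftGadget u, p ∈ C) :
    φ (pt u 1) = pt u' 1 ∧ (liftGadget u).map φ = liftGadget u' := by
  obtain ⟨-, hneg⟩ := hφ.map_negGadget hu fun p hp => hG p (List.mem_append_left _ hp)
  have h₂ : φ (pt u 2) = pt u' 2 := by
    simp only [negGadget, List.map_cons, List.map_nil, List.cons.injEq] at hneg
    exact hneg.2.1
  have h₁ : φ (pt u 1) = pt u' 1 :=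
    hφ.map_pt_of_horizontal hu ⟨hG _ (by simp [liftGadget, negGadget]), h₂⟩ (by norm_num)
      (hG _ (by simp [liftGadget])) (by norm_num) (by norm_num) (by ring) (by ring)
  exact ⟨h₁, by simp [liftGadget, hneg, h₁]⟩

theorem map_mulGadget (hφ : IsGridFixing C φ) {u v m u' v' : ℝ}
    (hu : pt u 0 ∈ C ∧ φ (pt u 0) = pt u' 0) (hv : pt v 1 ∈ C ∧ φ (pt v 1) = pt v' 1)
    (hm : pt m 1 ∈ C ∧ φ (pt m 1) = pt m 1) (hm0 : m ≠ 0) (hum : u ≠ m) (hu'm : u' ≠ m)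
    (hG : ∀ p ∈ mulGadget u v m, p ∈ C) :
    φ (pt (u * v / m) 0) = pt (u' * v' / m) 0 ∧ (mulGadget u v m).map φ = mulGadget u' v' m := by
  have hw : ∀ s, s ≠ m → s / (s - m) ≠ 1 := fun s hs h => by
    rw [div_eq_one_iff_eq (sub_ne_zero.mpr hs)] at h; exact hm0 (by linarith)
  have h₁ : φ (pt 0 (u / (u - m))) = pt 0 (u' / (u' - m)) :=
    hφ.map_pt_of_vertical hu hm (hG _ (by simp [mulGadget])) hum hu'm
      (by field_simp [sub_ne_zero.mpr hum]; ring) (by field_simp [sub_ne_zero.mpr hu'm]; ring)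
  have h₂ : φ (pt (u * v / m) 0) = pt (u' * v' / m) 0 :=
    hφ.map_pt_of_horizontal ⟨hG _ (by simp [mulGadget]), h₁⟩ hv (by norm_num)
      (hG _ (by simp [mulGadget])) (hw u hum) (hw u' hu'm)
      (by field_simp [sub_ne_zero.mpr hum]; ring) (by field_simp [sub_ne_zero.mpr hu'm]; ring)
  exact ⟨h₂, by simp [mulGadget, h₁, h₂]⟩

end IsGridFixing

theorem List.map_eq_self_iff {α : Type*} {f : α → α} {l : List α} :
    l.map f = l ↔ ∀ x ∈ l, f x = x := by
  conv_lhs => rhs; rw [← List.map_id l]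
  exact List.map_eq_map_iff

def natGadget : ℕ → List (ESp 2)
  | 0 => []
  | n + 1 => natGadget n ++ addGadget n 1

def intGadget (z : ℤ) : List (ESp 2) := natGadget z.natAbs ++ negGadget z.natAbs

def ratGadget (r : ℚ) : List (ESp 2) :=
  intGadget r.num ++ natGadget r.den ++ liftGadget r.den ++ mulGadget r.num 1 r.den

namespace IsGridFixing

variable {C : Set (ESp 2)} {φ : ESp 2 → ESp 2}

theorem map_natGadget (hφ : IsGridFixing C φ) (n : ℕ) (hG : ∀ p ∈ natGadget n, p ∈ C) :
    (pt n 0 ∈ C ∧ φ (pt n 0) = pt n 0) ∧ (natGadget n).map φ = natGadget n := by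
  induction n with
  | zero => exact ⟨by simpa using hφ.grid 0 0 (by norm_num) (by norm_num), rfl⟩
  | succ n ih =>
    have hG' : ∀ p ∈ addGadget n 1, p ∈ C := fun p hp => hG p (List.mem_append_right _ hp)
    obtain ⟨hn, hmap⟩ := ih fun p hp => hG p (List.mem_append_left _ hp)
    obtain ⟨hout, hadd⟩ := hφ.map_addGadget hn (hφ.grid 1 0 (by norm_num) (by norm_num)) hG'
    push_cast
    exact ⟨⟨hG' _ (by simp [addGadget]), hout⟩, by simp [natGadget, hmap, hadd]⟩

theorem map_intGadget (hφ : IsGridFixing C φ) (z : ℤ) (hG : ∀ p ∈ intGadget z, p ∈ C) :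
    (pt z 0 ∈ C ∧ φ (pt z 0) = pt z 0) ∧ (intGadget z).map φ = intGadget z := by
  have hG' : ∀ p ∈ negGadget z.natAbs, p ∈ C := fun p hp => hG p (List.mem_append_right _ hp)
  obtain ⟨hn, hmap⟩ := hφ.map_natGadget z.natAbs fun p hp => hG p (List.mem_append_left _ hp)
  obtain ⟨hout, hneg⟩ := hφ.map_negGadget hn hG'
  refine ⟨?_, by simp only [intGadget, List.map_append, hmap, hneg]⟩
  rcases Int.natAbs_eq z with h | h <;> rw [h] <;> simp only [Int.cast_neg, Int.cast_natCast]
  · exact hn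
  · exact ⟨hG' _ (by simp [negGadget]), hout⟩

theorem map_ratGadget (hφ : IsGridFixing C φ) {r : ℚ} (hr : r ≠ 1)
    (hG : ∀ p ∈ ratGadget r, p ∈ C) :
    (pt r 0 ∈ C ∧ φ (pt r 0) = pt r 0) ∧ (ratGadget r).map φ = ratGadget r := by
  obtain ⟨hnum, hmap₁⟩ := hφ.map_intGadget r.num fun p hp => hG p (by simp [ratGadget, hp])
  obtain ⟨hden, hmap₂⟩ := hφ.map_natGadget r.den fun p hp => hG p (by simp [ratGadget, hp])
  obtain ⟨hlift, hmap₃⟩ := hφ.map_liftGadget hden fun p hp => hG p (by simp [ratGadget, hp])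
  have hden0 : (r.den : ℝ) ≠ 0 := by exact_mod_cast r.den_nz
  have hnum_den : (r.num : ℝ) ≠ r.den := fun h => hr (by
    have : (r : ℝ) = 1 := by rw [Rat.cast_def, h, div_self hden0]
    exact_mod_cast this)
  have hG₄ : ∀ p ∈ mulGadget r.num 1 r.den, p ∈ C := fun p hp => hG p (by simp [ratGadget, hp])
  obtain ⟨hout, hmap₄⟩ := hφ.map_mulGadget hnum (hφ.grid 1 1 (by norm_num) (by norm_num))
    ⟨hG _ (by simp [ratGadget, liftGadget]), hlift⟩ hden0 hnum_den hnum_den hG₄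
  have hr_eq : (r : ℝ) = r.num * 1 / r.den := by rw [Rat.cast_def, mul_one]
  rw [hr_eq]
  exact ⟨⟨hG₄ _ (by simp [mulGadget]), hout⟩, by simp [ratGadget, hmap₁, hmap₂, hmap₃, hmap₄]⟩

end IsGridFixing

lemma aeval_eq_aeval_divX_mul_add (x : ℝ) (p : ℤ[X]) :
    aeval x p = aeval x p.divX * x + p.coeff 0 := by
  conv_lhs => rw [← divX_mul_X_add p]
  simp

/-- Horner's scheme `p(x) = (p / X)(x) * x + p(0)`; the product with `x` is formed by
`mulGadget` through the points `(m q * x, 1)` and `(m q, 1)`, where `q = p / X`. -/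
def hornerGadget (m : ℤ[X] → ℝ) : ℕ → ℤ[X] → ℝ → List (ESp 2)
  | 0, p, _ => intGadget (p.coeff 0)
  | n + 1, p, x => intGadget (p.coeff 0) ++ hornerGadget m n p.divX x ++
      mulGadget (aeval x p.divX) (m p.divX * x) (m p.divX) ++
      addGadget (aeval x p.divX * x) (p.coeff 0)

namespace IsGridFixing

variable {C : Set (ESp 2)} {φ : ESp 2 → ESp 2}

theorem map_hornerGadget (hφ : IsGridFixing C φ) {m : ℤ[X] → ℝ} {x x' : ℝ}
    (hm : ∀ q, m q = 1 ∨ m q = 2)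
    (hlift : ∀ q, pt (m q * x) 1 ∈ C ∧ φ (pt (m q * x) 1) = pt (m q * x') 1) (n : ℕ)
    (p : ℤ[X]) (hp : p.natDegree ≤ n)
    (hx : ∀ j < n, aeval x (divX^[j + 1] p) ≠ m (divX^[j + 1] p))
    (hx' : ∀ j < n, aeval x' (divX^[j + 1] p) ≠ m (divX^[j + 1] p))
    (hG : ∀ y ∈ hornerGadget m n p x, y ∈ C) :
    (pt (aeval x p) 0 ∈ C ∧ φ (pt (aeval x p) 0) = pt (aeval x' p) 0) ∧
      (hornerGadget m n p x).map φ = hornerGadget m n p x' := by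
  induction n generalizing p with
  | zero =>
    have hconst : ∀ y : ℝ, aeval y p = p.coeff 0 := fun y => by
      conv_lhs => rw [eq_C_of_natDegree_eq_zero (Nat.le_zero.mp hp)]
      simp
    rw [hconst, hconst]
    exact hφ.map_intGadget _ hG
  | succ n ih =>
    rw [aeval_eq_aeval_divX_mul_add x p, aeval_eq_aeval_divX_mul_add x' p]
    simp only [hornerGadget, List.mem_append, or_imp, forall_and] at hG ⊢
    obtain ⟨⟨⟨hG₁, hG₂⟩, hG₃⟩, hG₄⟩ := hG
    set q := p.divX
    obtain ⟨hc, hmap₁⟩ := hφ.map_intGadget _ hG₁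
    obtain ⟨hq, hmap₂⟩ := ih q (by rw [natDegree_divX_eq_natDegree_tsub_one]; omega)
      (fun j hj => hx (j + 1) (by omega)) (fun j hj => hx' (j + 1) (by omega)) hG₂
    have hm0 : m q ≠ 0 := by rcases hm q with h | h <;> rw [h] <;> norm_num
    obtain ⟨hprod, hmap₃⟩ := hφ.map_mulGadget hq (hlift q)
      (hφ.grid _ 1 (by rcases hm q with h | h <;> simp [h]) (by norm_num)) hm0
      (hx 0 n.succ_pos) (hx' 0 n.succ_pos) hG₃
    have hcancel : ∀ u y : ℝ, u * (m q * y) / m q = u * y := fun u y => by field_simp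
    rw [hcancel, hcancel] at hprod
    obtain ⟨hsum, hmap₄⟩ := hφ.map_addGadget
      ⟨hG₃ _ (by simp [mulGadget, hcancel]), hprod⟩ hc hG₄
    exact ⟨⟨hG₄ _ (by simp [addGadget]), hsum⟩,
      by simp only [List.map_append, hmap₁, hmap₂, hmap₃, hmap₄]⟩

end IsGridFixing

theorem exists_rat_isolating {B : Set ℝ} (hB : B.Finite) (ζ : ℝ) :
    ∃ r₁ r₂ : ℚ, (r₁ : ℝ) < ζ ∧ ζ < r₂ ∧ ∀ s ∈ B, s ∈ Set.Icc (r₁ : ℝ) r₂ → s = ζ := by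
  obtain ⟨ε, hε, hball⟩ :=
    Metric.isOpen_iff.mp (hB.sdiff (t := {ζ})).isClosed.isOpen_compl ζ (by simp)
  obtain ⟨r₁, h₁, h₁'⟩ := exists_rat_btwn (show ζ - ε < ζ by linarith)
  obtain ⟨r₂, h₂, h₂'⟩ := exists_rat_btwn (show ζ < ζ + ε by linarith)
  refine ⟨r₁, r₂, h₁', h₂, fun s hs ⟨hs₁, hs₂⟩ => by_contra fun hne => hball ?_ ⟨hs, hne⟩⟩
  rw [Metric.mem_ball, Real.dist_eq, abs_sub_lt_iff]
  constructor <;> linarith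

theorem finite_setOf_aeval_eq {q : ℤ[X]} {c : ℝ} (hq : q.map (algebraMap ℤ ℝ) ≠ C c) :
    {s : ℝ | aeval s q = c}.Finite :=
  (finite_setOfPred_isRoot (sub_ne_zero.mpr hq)).subset fun s hs => by
    rw [Set.mem_ofPred_eq, IsRoot.def, eval_sub, eval_map_algebraMap, eval_C]
    exact sub_eq_zero.mpr hs

def configGadget (P : ℤ[X]) (m : ℤ[X] → ℝ) (r₁ r₂ : ℚ) (x : ℝ) : List (ESp 2) :=
  ratGadget r₁ ++ ratGadget r₂ ++ [pt x 0] ++ addGadget x x ++ liftGadget x ++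
    liftGadget (x + x) ++ hornerGadget m P.natDegree P x

theorem framedBy_of_forall_map_eq {L : List (ESp 2)}
    (h : ∀ φ, IsGridFixing (Qsq ∪ {p | p ∈ L}) φ → L.map φ = L) :
    FramedBy (Qsq ∪ {p | p ∈ L}) Qsq := by
  refine ⟨Set.subset_union_left, fun R' φ hL hQ => ?_⟩
  have hmap := h φ ⟨⟨R', hL⟩, Set.subset_union_left, hQ⟩
  rintro p (hp | hp)
  · exact hQ p hp
  · exact List.map_eq_self_iff.mp hmap p hp

theorem IsGridFixing.map_configGadget {C : Set (ESp 2)} {φ : ESp 2 → ESp 2}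
    (hφ : IsGridFixing C φ) {P : ℤ[X]} {m : ℤ[X] → ℝ} {r₁ r₂ : ℚ} {ζ : ℝ}
    (hPζ : aeval ζ P = 0) (hm : ∀ q, m q = 1 ∨ m q = 2) (hr₁ : r₁ ≠ 1) (hr₂ : r₂ ≠ 1)
    (h₁ : (r₁ : ℝ) < ζ) (h₂ : ζ < r₂) (hroot : ∀ s ∈ Set.Icc (r₁ : ℝ) r₂, aeval s P = 0 → s = ζ)
    (htail : ∀ s ∈ Set.Icc (r₁ : ℝ) r₂, ∀ j < P.natDegree,
      aeval s (divX^[j + 1] P) ≠ m (divX^[j + 1] P))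
    (hG : ∀ p ∈ configGadget P m r₁ r₂ ζ, p ∈ C) :
    (configGadget P m r₁ r₂ ζ).map φ = configGadget P m r₁ r₂ ζ := by
  simp only [configGadget, List.mem_append, List.mem_singleton, or_imp, forall_and,
    forall_eq] at hG
  obtain ⟨⟨⟨⟨⟨⟨hG₁, hG₂⟩, hζ⟩, hG₃⟩, hG₄⟩, hG₅⟩, hG₆⟩ := hG
  obtain ⟨R', hL⟩ := hφ.lawrence
  obtain ⟨hr₁_fix, hmap₁⟩ := hφ.map_ratGadget hr₁ hG₁
  obtain ⟨hr₂_fix, hmap₂⟩ := hφ.map_ratGadget hr₂ hG₂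
  obtain ⟨t, ht⟩ := hφ.exists_map_eq_pt hζ
  have ht_mem : t ∈ Set.Icc (r₁ : ℝ) r₂ :=
    (hL.mem_Ioo_of_mem_Ioo hr₁_fix hr₂_fix hζ ht h₁ h₂).imp le_of_lt le_of_lt
  obtain ⟨hdouble, hmap₃⟩ := hφ.map_addGadget ⟨hζ, ht⟩ ⟨hζ, ht⟩ hG₃
  obtain ⟨hlift₁, hmap₄⟩ := hφ.map_liftGadget ⟨hζ, ht⟩ hG₄
  obtain ⟨hlift₂, hmap₅⟩ := hφ.map_liftGadget ⟨hG₃ _ (by simp [addGadget]), hdouble⟩ hG₅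
  have hlift : ∀ q, pt (m q * ζ) 1 ∈ C ∧ φ (pt (m q * ζ) 1) = pt (m q * t) 1 := fun q => by
    rcases hm q with h | h <;> simp only [h, one_mul, two_mul]
    · exact ⟨hG₄ _ (by simp [liftGadget]), hlift₁⟩
    · exact ⟨hG₅ _ (by simp [liftGadget]), hlift₂⟩
  obtain ⟨⟨-, hPt⟩, hmap₆⟩ := hφ.map_hornerGadget hm hlift _ P le_rfl
    (htail ζ ⟨h₁.le, h₂.le⟩) (htail t ht_mem) hG₆
  rw [hPζ, (hφ.grid 0 0 (by norm_num) (by norm_num)).2, pt_inj] at hPt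
  obtain rfl : t = ζ := hroot t ht_mem hPt.1.symm
  simp only [configGadget, List.map_append, List.map_cons, List.map_nil, hmap₁, hmap₂, ht,
    hmap₃, hmap₄, hmap₅, hmap₆]

/-- For each real algebraic number `ζ` there is a point configuration in `ℝ²` containing
`ζe₁` and `Q² + 𝟏 = {0, 1, 2}²` that is framed by `Q² + 𝟏`. -/
theorem algebraic_number_framed_configuration
    (ζ : ℝ) (hζ : IsAlgebraic ℚ ζ) :
    ∃ C : Set (ESp 2), C.Finite ∧ ζ • e1 ∈ C ∧ Qsq ⊆ C ∧ FramedBy C Qsq := by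
  obtain ⟨P, hP0, hPζ⟩ := (IsFractionRing.isAlgebraic_iff ℤ ℚ ℝ).mpr hζ
  -- `mulGadget` degenerates when the value at `(·, 0)` equals the projection centre `m`
  set m : ℤ[X] → ℝ := fun q => if aeval ζ q = 1 then 2 else 1
  have hm : ∀ q, m q = 1 ∨ m q = 2 := fun q => by by_cases h : aeval ζ q = 1 <;> simp [m, h]
  have hmζ : ∀ q, aeval ζ q ≠ m q := fun q => by
    by_cases h : aeval ζ q = 1 <;> simp [m, h]
  set tails := (Finset.range P.natDegree).image fun j => divX^[j + 1] P
  have hB : ({1} ∪ {s | aeval s P = 0} ∪ ⋃ q ∈ tails, {s | aeval s q = m q}).Finite := by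
    refine ((Set.finite_singleton 1).union (finite_setOf_aeval_eq ?_)).union
      (tails.finite_toSet.biUnion fun q _ => finite_setOf_aeval_eq fun h => hmζ q ?_)
    · rw [C_0]; exact (Polynomial.map_ne_zero_iff (algebraMap ℤ ℝ).injective_int).mpr hP0
    · rw [← eval_map_algebraMap, h, eval_C]
  obtain ⟨r₁, r₂, h₁, h₂, hiso⟩ := exists_rat_isolating hB ζ
  have hr : ∀ r : ℚ, (r : ℝ) ∈ Set.Icc (r₁ : ℝ) r₂ → (r : ℝ) ≠ ζ → r ≠ 1 := by
    rintro r hr hrζ rfl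
    exact hrζ (by simpa using hiso 1 (by simp) (by simpa using hr))
  refine ⟨Qsq ∪ {p | p ∈ configGadget P m r₁ r₂ ζ}, Qsq_finite.union (List.finite_toSet _),
    Or.inr (by simp [smul_e1, configGadget]), Set.subset_union_left,
    framedBy_of_forall_map_eq fun φ hφ => hφ.map_configGadget hPζ hm
      (hr r₁ ⟨le_rfl, by linarith⟩ h₁.ne) (hr r₂ ⟨by linarith, le_rfl⟩ h₂.ne') h₁ h₂
      (fun s hs hsP => hiso s (by simp [hsP]) hs) (fun s hs j hj h => ?_) fun p hp => Or.inr hp⟩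
  refine hmζ _ (hiso s ?_ hs ▸ h)
  exact Or.inr (Set.mem_biUnion (Finset.mem_image_of_mem _ (Finset.mem_range.mpr hj)) h)
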